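/- Let G be a graph with an edge {x,y}, and let G' be the graph on V(G)\{x,y} with edge set E(G\{x,y}) ∪ {{a,b} : a ∈ N_G(x), b ∈ N_G(y), a ≠ b, a,b ∉ {x,y}}. Then (I(G)^{[2]} : xy) = I(G'). -/

import Mathlib

open MvPolynomial

noncomputable section

/-- The product of the two variables corresponding to the endpoints of an edge. -/
def edgeProd (K : Type*) [CommSemiring K] {V : Type*} (e : Sym2 V) : MvPolynomial V K :=
  Sym2.lift ⟨fun a b => X a * X b, fun a b => mul_comm _ _⟩ e

/-- The edge ideal of a simple graph. -/
def edgeIdeal (K : Type*) [CommSemiring K] {V : Type*} (G : SimpleGraph V) :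
    Ideal (MvPolynomial V K) :=
  Ideal.span {p | ∃ e ∈ G.edgeSet, p = edgeProd K e}

/-- A finite set of edges of `G` forming a matching (pairwise disjoint edges). -/
def IsMatchingSet {V : Type*} (G : SimpleGraph V) (M : Finset (Sym2 V)) : Prop :=
  (↑M : Set (Sym2 V)) ⊆ G.edgeSet ∧
    (↑M : Set (Sym2 V)).Pairwise fun e f => ∀ v, v ∈ e → v ∉ f

/-- The matching number of a graph: the maximum size of a matching. -/
def matchingNumber {V : Type*} (G : SimpleGraph V) : ℕ :=
  sSup {k | ∃ M : Finset (Sym2 V), IsMatchingSet G M ∧ M.card = k}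

/-- The ideal generated by the squarefree monomials `∏_{e ∈ M} x_e` over all
`k`-matchings `M` of `G`; this is the `k`-th squarefree (matching) power of the edge ideal. -/
def matchingPow (K : Type*) [CommSemiring K] {V : Type*} (G : SimpleGraph V) (k : ℕ) :
    Ideal (MvPolynomial V K) :=
  Ideal.span {p | ∃ M : Finset (Sym2 V), IsMatchingSet G M ∧ M.card = k ∧
    p = ∏ e ∈ M, edgeProd K e}

/-- The `k`-th squarefree power of an ideal: the ideal generated by all squarefree
monomials belonging to `I ^ k`. -/
def sqfreePow {K V : Type*} [CommSemiring K] (I : Ideal (MvPolynomial V K)) (k : ℕ) :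
    Ideal (MvPolynomial V K) :=
  Ideal.span {p | (∃ A : Finset V, p = ∏ v ∈ A, X v) ∧ p ∈ I ^ k}

/-- Deleting a set of vertices from a graph (keeping the ambient vertex type:
all edges meeting `W` are removed). -/
def delVerts {V : Type*} (G : SimpleGraph V) (W : Set V) : SimpleGraph V where
  Adj a b := G.Adj a b ∧ a ∉ W ∧ b ∉ W
  symm := ⟨fun a b h => ⟨h.1.symm, h.2.2, h.2.1⟩⟩
  loopless := ⟨fun a h => G.loopless.irrefl a h.1⟩

/-- The whisker graph `W(G)`: to each vertex `x` of `G` (viewed as `inl x`) one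
attaches a new pendant vertex `inr x`. -/
def whiskerGraph {V : Type*} (G : SimpleGraph V) : SimpleGraph (V ⊕ V) :=
  SimpleGraph.fromRel fun a b =>
    (∃ u v, G.Adj u v ∧ a = Sum.inl u ∧ b = Sum.inl v) ∨ (∃ u, a = Sum.inl u ∧ b = Sum.inr u)

/-- The depth of `R/I` (w.r.t. the graded maximal ideal generated by the variables),
defined as the supremum of lengths of `R/I`-regular sequences of elements of that ideal. -/
def quotDepth {K V : Type*} [Field K] (I : Ideal (MvPolynomial V K)) : ℕ :=
  sSup {n | ∃ rs : List (MvPolynomial V K), rs.length = n ∧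
    (∀ r ∈ rs, r ∈ Ideal.span (Set.range (X : V → MvPolynomial V K))) ∧
    RingTheory.Sequence.IsRegular (MvPolynomial V K ⧸ I) rs}

/-- A finite graded free resolution of an ideal `I` of a polynomial ring, with
`rk i` the rank of the `i`-th free module and `deg i t` the degree (twist) of its
`t`-th basis element. -/
structure GradedFreeResolution {K V : Type*} [Field K] (I : Ideal (MvPolynomial V K)) where
  rk : ℕ → ℕ
  deg : (i : ℕ) → Fin (rk i) → ℕ
  len : ℕ
  rk_eq_zero : ∀ i, len < i → rk i = 0
  aug : (Fin (rk 0) → MvPolynomial V K) →ₗ[MvPolynomial V K] MvPolynomial V K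
  diff : (i : ℕ) →
    (Fin (rk (i + 1)) → MvPolynomial V K) →ₗ[MvPolynomial V K] (Fin (rk i) → MvPolynomial V K)
  aug_homogeneous : ∀ s : Fin (rk 0), (aug (Pi.single s 1)).IsHomogeneous (deg 0 s)
  diff_homogeneous : ∀ i (s : Fin (rk (i + 1))) (t : Fin (rk i)),
    (diff i (Pi.single s 1) t).IsHomogeneous (deg (i + 1) s - deg i t) ∧
      (deg (i + 1) s < deg i t → diff i (Pi.single s 1) t = 0)
  range_aug : LinearMap.range aug = I
  exact_zero : LinearMap.ker aug = LinearMap.range (diff 0)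
  exact_succ : ∀ i, LinearMap.ker (diff i) = LinearMap.range (diff (i + 1))

/-- The Castelnuovo–Mumford regularity of an ideal `I` of a polynomial ring: the least
`r` such that `I` admits a finite graded free resolution all of whose `i`-th twists are
at most `r + i`. -/
noncomputable def regCM {K V : Type*} [Field K] (I : Ideal (MvPolynomial V K)) : ℕ :=
  sInf {r | ∃ F : GradedFreeResolution I, ∀ i (t : Fin (F.rk i)), F.deg i t ≤ r + i}

end

/-!
Both ideals are monomial ideals, so `f ∈ (I(G)^{[2]} : xy)` iff for every monomial `m` of `f`,
`xy·m` is divisible by the product of a 2-matching of `G`. If one edge of that matching misses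
`x` and `y`, it already divides `m` and is an edge of `G'`; otherwise the matching is `{xa, yb}`
and `ab`, an edge of `G'`, divides `m`. Conversely an edge `ab` of `G'` gives the 2-matching
`{ab, xy}` or `{xa, yb}`, whose product is `xy·x_a x_b`.
-/

namespace MvPolynomial

variable {σ R : Type*} [CommSemiring R]

theorem support_mul_monomial_one (p : MvPolynomial σ R) (u : σ →₀ ℕ) :
    (p * monomial u 1).support = p.support.map (addRightEmbedding u) :=
  AddMonoidAlgebra.support_coeff_mul_single p _ (by simp) _

theorem colon_span_monomial_image {D D' : Set (σ →₀ ℕ)} {u : σ →₀ ℕ}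
    (h : ∀ m, (∃ d ∈ D, d ≤ m + u) ↔ ∃ d ∈ D', d ≤ m) :
    (Ideal.span ((fun d => monomial d (1 : R)) '' D)).colon (Ideal.span {monomial u (1 : R)}) =
      Ideal.span ((fun d => monomial d (1 : R)) '' D') := by
  ext p
  simp only [Ideal.colon_span, Submodule.mem_colon_singleton, smul_eq_mul,
    mem_ideal_span_monomial_image, support_mul_monomial_one, Finset.forall_mem_map,
    addRightEmbedding_apply, h]

end MvPolynomial

section EdgeMonomials

variable {V : Type*}

noncomputable def edgeExp : Sym2 V → V →₀ ℕ :=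
  Sym2.lift ⟨fun a b => Finsupp.single a 1 + Finsupp.single b 1, fun _ _ => add_comm _ _⟩

@[simp]
theorem edgeExp_mk (a b : V) : edgeExp s(a, b) = Finsupp.single a 1 + Finsupp.single b 1 :=
  rfl

theorem edgeExp_apply_of_notMem {e : Sym2 V} {v : V} (hv : v ∉ e) : edgeExp e v = 0 := by
  induction e with
  | h a b =>
    rw [Sym2.mem_iff, not_or] at hv
    simp [Ne.symm hv.1, Ne.symm hv.2]

theorem edgeExp_le_of_le_add {e f : Sym2 V} {m : V →₀ ℕ} (h : edgeExp e ≤ m + edgeExp f)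
    (hef : ∀ v ∈ e, v ∉ f) : edgeExp e ≤ m := by
  intro v
  by_cases hv : v ∈ e
  · simpa [edgeExp_apply_of_notMem (hef v hv)] using h v
  · simp [edgeExp_apply_of_notMem hv]

theorem edgeExp_mk_add_edgeExp_mk (a b c d : V) :
    edgeExp s(a, b) + edgeExp s(c, d) = edgeExp s(b, d) + edgeExp s(a, c) := by
  simp only [edgeExp_mk]
  abel

theorem edgeProd_eq_monomial (K : Type*) [CommSemiring K] (e : Sym2 V) :
    edgeProd K e = monomial (edgeExp e) 1 := by
  induction e with
  | h a b => simp [edgeProd, X, monomial_mul]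

theorem edgeIdeal_eq_span_monomial (K : Type*) [CommSemiring K] (G : SimpleGraph V) :
    edgeIdeal K G = Ideal.span ((fun d => monomial d (1 : K)) '' (edgeExp '' G.edgeSet)) := by
  rw [edgeIdeal, Set.image_image]
  congr 1
  ext p
  simp [edgeProd_eq_monomial, eq_comm]

theorem matchingPow_eq_span_monomial (K : Type*) [CommSemiring K] (G : SimpleGraph V) (k : ℕ) :
    matchingPow K G k = Ideal.span ((fun d => monomial d (1 : K)) ''
      ((fun M => ∑ e ∈ M, edgeExp e) '' {M | IsMatchingSet G M ∧ M.card = k})) := by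
  rw [matchingPow, Set.image_image]
  congr 1
  ext p
  simp [edgeProd_eq_monomial, monomial_sum_one, and_assoc, eq_comm (a := p)]

end EdgeMonomials

section ColonGraph

variable {V : Type*} {G : SimpleGraph V}

theorem image_sum_edgeExp_isMatchingSet_card_two [DecidableEq V] :
    (fun M => ∑ e ∈ M, edgeExp e) '' {M | IsMatchingSet G M ∧ M.card = 2} =
      {d | ∃ e ∈ G.edgeSet, ∃ f ∈ G.edgeSet, (∀ v ∈ e, v ∉ f) ∧ edgeExp e + edgeExp f = d} := by
  ext d
  constructor
  · rintro ⟨M, ⟨⟨hsub, hdisj⟩, hcard⟩, rfl⟩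
    obtain ⟨e, f, hef, rfl⟩ := Finset.card_eq_two.mp hcard
    exact ⟨e, hsub (by simp), f, hsub (by simp), hdisj (by simp) (by simp) hef,
      (Finset.sum_pair hef).symm⟩
  · rintro ⟨e, he, f, hf, hef, rfl⟩
    have hne : e ≠ f := by
      rintro rfl
      induction e with | h a b => exact hef a (Sym2.mem_mk_left a b) (Sym2.mem_mk_left a b)
    refine ⟨{e, f}, ⟨⟨?_, ?_⟩, Finset.card_pair hne⟩, Finset.sum_pair hne⟩
    · simp [Set.insert_subset_iff, he, hf]
    · rw [Finset.coe_pair, Set.pairwise_pair]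
      exact fun _ => ⟨hef, fun v hvf hve => hef v hve hvf⟩

def colonRel (G : SimpleGraph V) (x y a b : V) : Prop :=
  (delVerts G {x, y}).Adj a b ∨
    (a ∈ G.neighborSet x ∧ b ∈ G.neighborSet y ∧ a ≠ b ∧
      a ∉ ({x, y} : Set V) ∧ b ∉ ({x, y} : Set V))

-- The graph `G'` of the statement, with `x` and `y` kept as isolated vertices.
def colonGraph (G : SimpleGraph V) (x y : V) : SimpleGraph V :=
  SimpleGraph.fromRel (colonRel G x y)

variable {x y : V}

theorem notMem_of_mem_edgeSet_colonGraph {e : Sym2 V} (he : e ∈ (colonGraph G x y).edgeSet) :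
    ∀ v ∈ e, v ∉ s(x, y) := by
  induction e with
  | h a b =>
    simp only [colonGraph, SimpleGraph.mem_edgeSet, SimpleGraph.fromRel_adj, colonRel,
      delVerts] at he
    simp only [Sym2.mem_iff]
    aesop

theorem mem_edgeSet_colonGraph {e : Sym2 V} (he : e ∈ G.edgeSet) (hxy : ∀ v ∈ e, v ∉ s(x, y)) :
    e ∈ (colonGraph G x y).edgeSet := by
  induction e with
  | h a b =>
    simp only [colonGraph, SimpleGraph.mem_edgeSet, SimpleGraph.fromRel_adj, colonRel, delVerts]
    simp only [Sym2.mem_iff] at hxy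
    aesop

theorem exists_edge_colonGraph_le_add_of_mem {e f : Sym2 V} (he : e ∈ G.edgeSet)
    (hf : f ∈ G.edgeSet) (hef : ∀ v ∈ e, v ∉ f) (hx : x ∈ e) (hy : y ∈ f) :
    ∃ g ∈ (colonGraph G x y).edgeSet, edgeExp g ≤ edgeExp e + edgeExp f := by
  obtain ⟨a, rfl⟩ := Sym2.mem_iff_exists.mp hx
  obtain ⟨b, rfl⟩ := Sym2.mem_iff_exists.mp hy
  simp only [Sym2.mem_iff, not_or] at hef
  refine ⟨s(a, b), ?_, ?_⟩
  · simp only [colonGraph, SimpleGraph.mem_edgeSet, SimpleGraph.fromRel_adj, colonRel]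
    aesop
  · rw [edgeExp_mk_add_edgeExp_mk]
    exact le_self_add

theorem exists_edge_colonGraph_le_add {e f : Sym2 V} (he : e ∈ G.edgeSet) (hf : f ∈ G.edgeSet)
    (hef : ∀ v ∈ e, v ∉ f) :
    ∃ g ∈ (colonGraph G x y).edgeSet, edgeExp g ≤ edgeExp e + edgeExp f := by
  by_cases he' : ∀ v ∈ e, v ∉ s(x, y)
  · exact ⟨e, mem_edgeSet_colonGraph he he', le_self_add⟩
  by_cases hf' : ∀ v ∈ f, v ∉ s(x, y)
  · exact ⟨f, mem_edgeSet_colonGraph hf hf', le_add_self⟩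
  push Not at he' hf'
  obtain ⟨v, hve, hv⟩ := he'
  obtain ⟨w, hwf, hw⟩ := hf'
  rw [Sym2.mem_iff] at hv hw
  -- two disjoint edges each meeting the edge `xy` meet it in different endpoints
  rcases hv with rfl | rfl <;> rcases hw with rfl | rfl
  · exact absurd hwf (hef _ hve)
  · exact exists_edge_colonGraph_le_add_of_mem he hf hef hve hwf
  · rw [add_comm]
    exact exists_edge_colonGraph_le_add_of_mem hf he (fun u hu hue => hef u hue hu) hwf hve
  · exact absurd hwf (hef _ hve)

theorem exists_disjoint_edges_sum_eq_of_colonRel (hxy : G.Adj x y) {a b : V}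
    (hab : colonRel G x y a b) :
    ∃ e ∈ G.edgeSet, ∃ f ∈ G.edgeSet, (∀ v ∈ e, v ∉ f) ∧
      edgeExp e + edgeExp f = edgeExp s(a, b) + edgeExp s(x, y) := by
  rcases hab with ⟨hab, ha, hb⟩ | ⟨hxa, hyb, hne, ha, hb⟩
  · refine ⟨s(a, b), hab, s(x, y), hxy, ?_, rfl⟩
    simp only [Sym2.mem_iff]
    aesop
  · refine ⟨s(x, a), hxa, s(y, b), hyb, ?_, edgeExp_mk_add_edgeExp_mk x a y b⟩
    simp only [Sym2.mem_iff]
    aesop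

theorem exists_disjoint_edges_sum_eq (hxy : G.Adj x y) {g : Sym2 V}
    (hg : g ∈ (colonGraph G x y).edgeSet) :
    ∃ e ∈ G.edgeSet, ∃ f ∈ G.edgeSet, (∀ v ∈ e, v ∉ f) ∧
      edgeExp e + edgeExp f = edgeExp g + edgeExp s(x, y) := by
  induction g with
  | h a b =>
    rcases ((SimpleGraph.fromRel_adj _ a b).mp hg).2 with h | h
    · exact exists_disjoint_edges_sum_eq_of_colonRel hxy h
    · rw [Sym2.eq_swap]
      exact exists_disjoint_edges_sum_eq_of_colonRel hxy h

theorem exists_disjoint_edges_le_add_iff (hxy : G.Adj x y) (m : V →₀ ℕ) :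
    (∃ e ∈ G.edgeSet, ∃ f ∈ G.edgeSet, (∀ v ∈ e, v ∉ f) ∧
        edgeExp e + edgeExp f ≤ m + edgeExp s(x, y)) ↔
      ∃ g ∈ (colonGraph G x y).edgeSet, edgeExp g ≤ m := by
  constructor
  · rintro ⟨e, he, f, hf, hef, hle⟩
    obtain ⟨g, hg, hge⟩ := exists_edge_colonGraph_le_add (x := x) (y := y) he hf hef
    exact ⟨g, hg, edgeExp_le_of_le_add (hge.trans hle) (notMem_of_mem_edgeSet_colonGraph hg)⟩
  · rintro ⟨g, hg, hle⟩
    obtain ⟨e, he, f, hf, hef, hsum⟩ := exists_disjoint_edges_sum_eq hxy hg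
    exact ⟨e, he, f, hf, hef, hsum ▸ add_le_add_left hle _⟩

end ColonGraph

theorem matchingPow_two_colon_edge_general {K : Type*} [Field K] {V : Type*}
    (G : SimpleGraph V) (x y : V) (hxy : G.Adj x y) :
    Submodule.colon (matchingPow K G 2) (Ideal.span {(X x * X y : MvPolynomial V K)}) =
      edgeIdeal K
        (SimpleGraph.fromRel fun a b =>
          (delVerts G {x, y}).Adj a b ∨
            (a ∈ G.neighborSet x ∧ b ∈ G.neighborSet y ∧ a ≠ b ∧
              a ∉ ({x, y} : Set V) ∧ b ∉ ({x, y} : Set V))) := by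
  classical
  change _ = edgeIdeal K (colonGraph G x y)
  rw [show (X x * X y : MvPolynomial V K) = monomial (edgeExp s(x, y)) 1 from
      edgeProd_eq_monomial K s(x, y), matchingPow_eq_span_monomial,
    image_sum_edgeExp_isMatchingSet_card_two, edgeIdeal_eq_span_monomial]
  exact colon_span_monomial_image fun m => by
    simpa [and_assoc] using exists_disjoint_edges_le_add_iff hxy m

/-- `(I(G)^{[2]} : xy) = I(G')` where `G'` has vertex set `V(G) \ {x,y}` and edge
set `E(G \ {x,y}) ∪ {{a,b} : a ∈ N_G(x), b ∈ N_G(y), a ≠ b, a,b ∉ {x,y}}`. -/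
theorem matchingPow_two_colon_edge {K : Type*} [Field K] {V : Type*} [Fintype V]
    (G : SimpleGraph V) (x y : V) (hxy : G.Adj x y) :
    Submodule.colon (matchingPow K G 2) (Ideal.span {(X x * X y : MvPolynomial V K)}) =
      edgeIdeal K
        (SimpleGraph.fromRel fun a b =>
          (delVerts G {x, y}).Adj a b ∨
            (a ∈ G.neighborSet x ∧ b ∈ G.neighborSet y ∧ a ≠ b ∧
              a ∉ ({x, y} : Set V) ∧ b ∉ ({x, y} : Set V))) :=
  matchingPow_two_colon_edge_general G x y hxy
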